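/- arXiv:2011.10151 — 6 statements merged into one kernel-verified Lean document; each statement's English description precedes it below -/
import Mathlib

section
/- Every Tarskian logic L = (F(Θ,V), ⊢) is characterized by a two-valued restricted non-deterministic matrix: defining the Θ-multialgebra 2(Θ) with universe {0,1} where every multioperation returns the whole universe {0,1}, and F_L the set of valuations ν : F(Θ,V) → {0,1} whose preimage of 1 is a ⊢-closed set of formulas, one has Γ ⊢ φ if and only if for every ν ∈ F_L, ν[Γ] ⊆ {1} implies ν(φ) = 1. -/
/-- Formulas over a propositional signature `Θ` (with `Θ k` the `k`-ary
connectives) and variables `V`: the free `Θ`-algebra on `V`. -/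
inductive Fm (Θ : ℕ → Type) (V : Type) : Type
  | var : V → Fm Θ V
  | app : {k : ℕ} → Θ k → (Fin k → Fm Θ V) → Fm Θ V

/-- Every Tarskian logic `L = (F(Θ,V), ⊢)` is characterized by the
two-valued RNmatrix `2(L)`: since every multioperation of `2(Θ)` returns the
whole universe, every function `ν : F(Θ,V) → {0,1}` is a valuation, and the
restricted set `F_L` consists of those valuations whose preimage of `1` (`true`)
is a `⊢`-closed set of formulas. Then `Γ ⊢ φ` iff every `ν ∈ F_L` with
`ν[Γ] ⊆ {1}` satisfies `ν(φ) = 1`. -/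
theorem stmt_2 {Θ : ℕ → Type} {V : Type}
    (Tr : Set (Fm Θ V) → Fm Θ V → Prop)
    (refl : ∀ Γ φ, φ ∈ Γ → Tr Γ φ)
    (mono : ∀ Γ Δ φ, Tr Γ φ → Γ ⊆ Δ → Tr Δ φ)
    (cut : ∀ Γ Δ ψ, (∀ φ ∈ Δ, Tr Γ φ) → Tr Δ ψ → Tr Γ ψ)
    (Γ : Set (Fm Θ V)) (φ : Fm Θ V) :
    Tr Γ φ ↔
      ∀ ν : Fm Θ V → Bool,
        (∀ ψ, Tr {χ | ν χ = true} ψ → ν ψ = true) →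
        (∀ γ ∈ Γ, ν γ = true) → ν φ = true := by
  classical
  constructor
  · intro h ν hclosed hΓ
    exact hclosed φ (mono Γ _ φ h (fun γ hγ => hΓ γ hγ))
  · intro h
    have := h (fun χ => decide (Tr Γ χ))
      (fun ψ hψ => by
        simp only [decide_eq_true_eq] at *
        exact cut Γ _ ψ (fun χ hχ => by simpa using hχ) hψ)
      (fun γ hγ => by simp [refl Γ γ hγ])
    simpa using this
end

section
/- If the Tarskian logic L = (F(Θ,V), ⊢) is structural (Γ ⊢ φ implies ρ[Γ] ⊢ ρ(φ) for every substitution ρ), then the two-valued RNmatrix 2(L) = (2(Θ), {1}, F_L) characterizing L is structural, i.e., ν ∘ ρ ∈ F_L for every ν ∈ F_L and every substitution ρ. -/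
/-- The substitution (endomorphism of the formula algebra) induced by
`σ : V → Fm Θ V`. -/
def subst {Θ : ℕ → Type} {V : Type} (σ : V → Fm Θ V) : Fm Θ V → Fm Θ V
  | .var v => σ v
  | .app c args => .app c (fun i => subst σ (args i))

/-- If the Tarskian logic `L` is structural, then the two-valued
RNmatrix `2(L) = (2(Θ), {1}, F_L)` is structural: `ν ∘ ρ ∈ F_L` for every
`ν ∈ F_L` and substitution `ρ` (where `F_L` is the set of valuations whose
preimage of `true` is `⊢`-closed). -/
theorem stmt_3 {Θ : ℕ → Type} {V : Type}
    (Tr : Set (Fm Θ V) → Fm Θ V → Prop)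
    (refl : ∀ Γ φ, φ ∈ Γ → Tr Γ φ)
    (mono : ∀ Γ Δ φ, Tr Γ φ → Γ ⊆ Δ → Tr Δ φ)
    (cut : ∀ Γ Δ ψ, (∀ φ ∈ Δ, Tr Γ φ) → Tr Δ ψ → Tr Γ ψ)
    (structural : ∀ (σ : V → Fm Θ V) Γ φ, Tr Γ φ → Tr (subst σ '' Γ) (subst σ φ)) :
    ∀ ν : Fm Θ V → Bool,
      (∀ ψ, Tr {χ | ν χ = true} ψ → ν ψ = true) →
      ∀ σ : V → Fm Θ V,
        ∀ ψ, Tr {χ | ν (subst σ χ) = true} ψ → ν (subst σ ψ) = true := by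
  intro ν hν σ ψ h
  apply hν
  have h2 := structural σ _ _ h
  refine mono _ _ _ h2 ?_
  rintro _ ⟨χ, hχ, rfl⟩
  exact hχ
end

section
/- In Kearns's semantics for a modal logic L, for every k ≥ 0, every valuation ν ∈ Val_k^L, and every substitution ρ, the composite ν ∘ ρ belongs to Val_k^L; consequently the set F_L = ⋂_{k≥0} Val_k^L is closed under precomposition with substitutions, i.e., the RNmatrix K_L is structural. -/
/-- Kearns's four truth-values. -/
inductive V4 : Type
  | T | t | f | F

/-- The designated values `D = {T, t}`. -/
def D4 : Set V4 := {V4.T, V4.t}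

/-- `ν` is a valuation (multialgebra homomorphism) over the Nmatrix given by
the multioperations `ops`. -/
def IsVal {Θ : ℕ → Type} {V : Type} (ops : ∀ {k : ℕ}, Θ k → (Fin k → V4) → Set V4)
    (ν : Fm Θ V → V4) : Prop :=
  ∀ (k : ℕ) (c : Θ k) (args : Fin k → Fm Θ V),
    ν (.app c args) ∈ ops c (fun i => ν (args i))

/-- Kearns's decreasing hierarchy of sets of valuations `Val_k`. -/
def Val {Θ : ℕ → Type} {V : Type} (ops : ∀ {k : ℕ}, Θ k → (Fin k → V4) → Set V4) :
    ℕ → Set (Fm Θ V → V4)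
  | 0 => {ν | IsVal ops ν}
  | k + 1 => {ν | ν ∈ Val ops k ∧
      ∀ α, (∀ ν' ∈ Val ops k, ν' α ∈ D4) → ν α = V4.T}

/-- For every `k ≥ 0`, every `ν ∈ Val_k` and every substitution
`ρ`, the composite `ν ∘ ρ` belongs to `Val_k`; consequently
`F_L = ⋂_{k} Val_k` is closed under precomposition with substitutions, i.e. the
RNmatrix `K_L` is structural. -/
theorem stmt_4 {Θ : ℕ → Type} {V : Type}
    (ops : ∀ {k : ℕ}, Θ k → (Fin k → V4) → Set V4)
    (hne : ∀ (k : ℕ) (c : Θ k) (as : Fin k → V4), (ops c as).Nonempty) :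
    (∀ (k : ℕ) (ν : Fm Θ V → V4) (ρ : V → Fm Θ V),
        ν ∈ Val ops k → (fun φ => ν (subst ρ φ)) ∈ Val ops k) ∧
    (∀ (ν : Fm Θ V → V4) (ρ : V → Fm Θ V),
        (∀ k, ν ∈ Val ops k) → ∀ k, (fun φ => ν (subst ρ φ)) ∈ Val ops k) := by
  have main : ∀ (k : ℕ) (ν : Fm Θ V → V4) (ρ : V → Fm Θ V),
      ν ∈ Val ops k → (fun φ => ν (subst ρ φ)) ∈ Val ops k := by
    intro k
    induction k with
    | zero =>
      intro ν ρ hν k c args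
      exact hν k c (fun i => subst ρ (args i))
    | succ k ih =>
      intro ν ρ hν
      refine ⟨ih ν ρ hν.1, ?_⟩
      intro α hα
      exact hν.2 (subst ρ α) (fun ν' hν' => hα _ (ih ν' ρ hν'))
  exact ⟨main, fun ν ρ h k => main k ν ρ (h k)⟩
end

section
/- Let b be a bivaluation for mbCcl and define ν : F(Σ°,V) → {F,t,T} by: ν(α) = F iff b(α) = 0; ν(α) = t iff b(α) = 1 and b(¬α) = 1; ν(α) = T iff b(α) = 1 and b(¬α) = 0. Then ν is a multialgebra homomorphism into A_mbCcl satisfying the restriction that ν(α) = t implies ν(α ∧ ¬α) = T; in particular ν ∈ F_mbCcl and b(α) = 1 iff ν(α) ∈ {t,T}. -/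
/-- Formulas over the signature Σ° (¬, ∘ unary; ∧, ∨, → binary). -/
inductive PF : Type
  | var : ℕ → PF
  | neg : PF → PF
  | cons : PF → PF
  | and : PF → PF → PF
  | or : PF → PF → PF
  | imp : PF → PF → PF

/-- The three truth-values `F`, `t`, `T`. -/
inductive V3 : Type
  | F | t | T

/-- Designated values `D = {t, T}`. -/
def D3 : Set V3 := {V3.t, V3.T}

/-- ¬̃ of `A_mbCcl`. -/
def mbNeg : V3 → Set V3
  | .F => D3
  | .t => D3
  | .T => {V3.F}

/-- ∘̃ of `A_mbCcl`. -/
def mbCons : V3 → Set V3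
  | .F => D3
  | .t => {V3.F}
  | .T => D3

/-- ∧̃ of `A_mbCcl`. -/
def mbAnd : V3 → V3 → Set V3
  | .F, _ => {V3.F}
  | _, .F => {V3.F}
  | _, _ => D3

/-- ∨̃ of `A_mbCcl`. -/
def mbOr : V3 → V3 → Set V3
  | .F, .F => {V3.F}
  | _, _ => D3

/-- →̃ of `A_mbCcl`. -/
def mbImp : V3 → V3 → Set V3
  | .F, _ => D3
  | _, .F => {V3.F}
  | _, _ => D3

/-- From a bivaluation `b` for mbCcl, the induced map `ν`
(`ν(α) = F` iff `b(α) = 0`; `ν(α) = t` iff `b(α) = 1` and `b(¬α) = 1`;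
`ν(α) = T` iff `b(α) = 1` and `b(¬α) = 0`) is a multialgebra homomorphism into
`A_mbCcl` satisfying `ν(α) = t → ν(α ∧ ¬α) = T`; in particular `ν ∈ F_mbCcl`
and `b(α) = 1` iff `ν(α) ∈ {t, T}`. -/
theorem stmt_6 (b : PF → Bool)
    (B1 : ∀ α β, b (PF.and α β) = true ↔ (b α = true ∧ b β = true))
    (B2 : ∀ α β, b (PF.or α β) = true ↔ (b α = true ∨ b β = true))
    (B3 : ∀ α β, b (PF.imp α β) = true ↔ (b α = false ∨ b β = true))
    (B4 : ∀ α, b α = false → b (PF.neg α) = true)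
    (B'1 : ∀ α, b (PF.cons α) = true → (b α = false ∨ b (PF.neg α) = false))
    (B'2 : ∀ α, b (PF.neg (PF.cons α)) = true → (b α = true ∧ b (PF.neg α) = true))
    (B'3 : ∀ α, b (PF.neg (PF.and α (PF.neg α))) = true → b (PF.cons α) = true)
    (ν : PF → V3)
    (hν : ∀ α, ν α = if b α = true then
        (if b (PF.neg α) = true then V3.t else V3.T) else V3.F) :
    (∀ α, ν (PF.neg α) ∈ mbNeg (ν α)) ∧
    (∀ α, ν (PF.cons α) ∈ mbCons (ν α)) ∧
    (∀ α β, ν (PF.and α β) ∈ mbAnd (ν α) (ν β)) ∧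
    (∀ α β, ν (PF.or α β) ∈ mbOr (ν α) (ν β)) ∧
    (∀ α β, ν (PF.imp α β) ∈ mbImp (ν α) (ν β)) ∧
    (∀ α, ν α = V3.t → ν (PF.and α (PF.neg α)) = V3.T) ∧
    (∀ α, b α = true ↔ ν α ∈ D3) := by
  have hD : ∀ α, b α = true ↔ ν α ∈ D3 := by
    intro α; rw [hν]
    cases h : b α <;> cases h2 : b (PF.neg α) <;> simp [D3]
  refine ⟨?_, ?_, ?_, ?_, ?_, ?_, hD⟩
  · intro α
    have h4 := B4 α
    rw [hν α, hν (PF.neg α)]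
    clear hν hD B1 B2 B3 B4 B'1 B'2 B'3
    cases hb : b α <;> cases hn : b (PF.neg α) <;>
      cases hnn : b (PF.neg (PF.neg α)) <;> simp_all [mbNeg, D3]
  · intro α
    have h1 := B'1 α
    have h2 := B'2 α
    have h4 := B4 (PF.cons α)
    rw [hν α, hν (PF.cons α)]
    clear hν hD B1 B2 B3 B4 B'1 B'2 B'3
    cases hb : b α <;> cases hn : b (PF.neg α) <;>
      cases hc : b (PF.cons α) <;> cases hnc : b (PF.neg (PF.cons α)) <;>
      simp_all [mbCons, D3]
  · intro α β
    have h := B1 α β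
    rw [hν α, hν β, hν (PF.and α β)]
    clear hν hD B1 B2 B3 B4 B'1 B'2 B'3
    cases hb : b α <;> cases hc : b β <;>
      cases hn : b (PF.neg α) <;> cases hn2 : b (PF.neg β) <;>
      cases hab : b (PF.and α β) <;>
      cases hnab : b (PF.neg (PF.and α β)) <;>
      simp_all [mbAnd, D3]
  · intro α β
    have h := B2 α β
    rw [hν α, hν β, hν (PF.or α β)]
    clear hν hD B1 B2 B3 B4 B'1 B'2 B'3
    cases hb : b α <;> cases hc : b β <;>
      cases hn : b (PF.neg α) <;> cases hn2 : b (PF.neg β) <;>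
      cases hab : b (PF.or α β) <;>
      cases hnab : b (PF.neg (PF.or α β)) <;>
      simp_all [mbOr, D3]
  · intro α β
    have h := B3 α β
    rw [hν α, hν β, hν (PF.imp α β)]
    clear hν hD B1 B2 B3 B4 B'1 B'2 B'3
    cases hb : b α <;> cases hc : b β <;>
      cases hn : b (PF.neg α) <;> cases hn2 : b (PF.neg β) <;>
      cases hab : b (PF.imp α β) <;>
      cases hnab : b (PF.neg (PF.imp α β)) <;>
      simp_all [mbImp, D3]
  · intro α hα
    rw [hν α] at hα
    have hb : b α = true := by
      cases h : b α
      · rw [h] at hα; simp at hα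
      · rfl
    have hn : b (PF.neg α) = true := by
      cases h : b (PF.neg α)
      · rw [hb, h] at hα; simp at hα
      · rfl
    have hab : b (PF.and α (PF.neg α)) = true := (B1 _ _).2 ⟨hb, hn⟩
    have hnab : b (PF.neg (PF.and α (PF.neg α))) = false := by
      cases h : b (PF.neg (PF.and α (PF.neg α))) with
      | true =>
        rcases B'1 α (B'3 α h) with h2 | h2
        · rw [hb] at h2; exact absurd h2 (by simp)
        · rw [hn] at h2; exact absurd h2 (by simp)
      | false => rfl
    rw [hν]
    simp [hab, hnab]
end

section
/- The three-valued RNmatrix M_mbCcl is sound for mbCcl: if Γ ⊢_mbCcl φ then for every valuation ν ∈ F_mbCcl with ν[Γ] ⊆ {t,T}, one has ν(φ) ∈ {t,T}. In particular, every axiom of mbCcl takes a designated value under every ν ∈ F_mbCcl. -/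
/-- `ν` is a valuation over the Nmatrix `(A_mbCcl, {t,T})`. -/
def IsHomMb (ν : PF → V3) : Prop :=
  (∀ α, ν (PF.neg α) ∈ mbNeg (ν α)) ∧
  (∀ α, ν (PF.cons α) ∈ mbCons (ν α)) ∧
  (∀ α β, ν (PF.and α β) ∈ mbAnd (ν α) (ν β)) ∧
  (∀ α β, ν (PF.or α β) ∈ mbOr (ν α) (ν β)) ∧
  (∀ α β, ν (PF.imp α β) ∈ mbImp (ν α) (ν β))

/-- Derivability in the Hilbert calculus mbCcl (Ax1–Ax9, Dummett's law,
bc1, cl, and modus ponens). -/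
inductive ProvMb (Γ : Set PF) : PF → Prop
  | prem {φ} : φ ∈ Γ → ProvMb Γ φ
  | ax1 (α β : PF) : ProvMb Γ (α.imp (β.imp α))
  | ax2 (α β γ : PF) :
      ProvMb Γ ((α.imp (β.imp γ)).imp ((α.imp β).imp (α.imp γ)))
  | ax3 (α β : PF) : ProvMb Γ (α.imp (β.imp (α.and β)))
  | ax4 (α β : PF) : ProvMb Γ ((α.and β).imp α)
  | ax5 (α β : PF) : ProvMb Γ ((α.and β).imp β)
  | ax6 (α β : PF) : ProvMb Γ (α.imp (α.or β))
  | ax7 (α β : PF) : ProvMb Γ (β.imp (α.or β))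
  | ax8 (α β γ : PF) :
      ProvMb Γ ((α.imp γ).imp ((β.imp γ).imp ((α.or β).imp γ)))
  | ax9 (α : PF) : ProvMb Γ (α.or α.neg)
  | dummett (α β : PF) : ProvMb Γ (α.or (α.imp β))
  | bc1 (α β : PF) : ProvMb Γ (α.cons.imp (α.imp (α.neg.imp β)))
  | cl (α : PF) : ProvMb Γ (((α.and α.neg).neg).imp α.cons)
  | mp {α β : PF} : ProvMb Γ (α.imp β) → ProvMb Γ α → ProvMb Γ β

/-- Soundness of mbCcl w.r.t. the RNmatrix `M_mbCcl`: if
`Γ ⊢_mbCcl φ` then every valuation `ν ∈ F_mbCcl` with `ν[Γ] ⊆ {t,T}` satisfies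
`ν(φ) ∈ {t,T}`. (In particular, every axiom of mbCcl takes a designated value
under every `ν ∈ F_mbCcl`.) -/
theorem stmt_7 (Γ : Set PF) (φ : PF) (h : ProvMb Γ φ)
    (ν : PF → V3) (hhom : IsHomMb ν)
    (hres : ∀ α, ν α = V3.t → ν (PF.and α (PF.neg α)) = V3.T)
    (hΓ : ∀ γ ∈ Γ, ν γ ∈ D3) :
    ν φ ∈ D3 := by
  have memD3 : ∀ x : V3, x ∈ D3 ↔ x ≠ V3.F := by
    intro x; cases x <;> simp [D3]
  have impM : ∀ a b z : V3, z ∈ mbImp a b ↔ (z = V3.F ↔ (a ≠ V3.F ∧ b = V3.F)) := by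
    intro a b z; cases a <;> cases b <;> cases z <;> simp [mbImp, D3]
  have andM : ∀ a b z : V3, z ∈ mbAnd a b ↔ (z = V3.F ↔ (a = V3.F ∨ b = V3.F)) := by
    intro a b z; cases a <;> cases b <;> cases z <;> simp [mbAnd, D3]
  have orM : ∀ a b z : V3, z ∈ mbOr a b ↔ (z = V3.F ↔ (a = V3.F ∧ b = V3.F)) := by
    intro a b z; cases a <;> cases b <;> cases z <;> simp [mbOr, D3]
  have negM : ∀ a z : V3, z ∈ mbNeg a ↔ (z = V3.F ↔ a = V3.T) := by
    intro a z; cases a <;> cases z <;> simp [mbNeg, D3]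
  have consM : ∀ a z : V3, z ∈ mbCons a ↔ (z = V3.F ↔ a = V3.t) := by
    intro a z; cases a <;> cases z <;> simp [mbCons, D3]
  obtain ⟨hn, hc, ha, ho, hi⟩ := hhom
  simp only [impM] at hi
  simp only [andM] at ha
  simp only [orM] at ho
  simp only [negM] at hn
  simp only [consM] at hc
  simp only [memD3] at hΓ ⊢
  induction h with
  | prem hp => exact hΓ _ hp
  | ax1 α β =>
    have h1 := hi β α
    have h2 := hi α (β.imp α)
    tauto
  | ax2 α β γ =>
    have h1 := hi β γ
    have h2 := hi α (β.imp γ)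
    have h3 := hi α β
    have h4 := hi α γ
    have h5 := hi (α.imp β) (α.imp γ)
    have h6 := hi (α.imp (β.imp γ)) ((α.imp β).imp (α.imp γ))
    tauto
  | ax3 α β =>
    have h1 := ha α β
    have h2 := hi β (α.and β)
    have h3 := hi α (β.imp (α.and β))
    tauto
  | ax4 α β =>
    have h1 := ha α β
    have h2 := hi (α.and β) α
    tauto
  | ax5 α β =>
    have h1 := ha α β
    have h2 := hi (α.and β) β
    tauto
  | ax6 α β =>
    have h1 := ho α β
    have h2 := hi α (α.or β)
    tauto
  | ax7 α β =>
    have h1 := ho α β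
    have h2 := hi β (α.or β)
    tauto
  | ax8 α β γ =>
    have h1 := ho α β
    have h2 := hi α γ
    have h3 := hi β γ
    have h4 := hi (α.or β) γ
    have h5 := hi (β.imp γ) ((α.or β).imp γ)
    have h6 := hi (α.imp γ) ((β.imp γ).imp ((α.or β).imp γ))
    tauto
  | ax9 α =>
    have h1 := hn α
    have h2 := ho α α.neg
    cases hα : ν α <;> simp_all
  | dummett α β =>
    have h1 := hi α β
    have h2 := ho α (α.imp β)
    tauto
  | bc1 α β =>
    have h1 := hc α
    have h2 := hn α
    have h3 := hi α.neg β
    have h4 := hi α (α.neg.imp β)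
    have h5 := hi α.cons (α.imp (α.neg.imp β))
    cases hα : ν α <;> simp_all
  | cl α =>
    have h1 := hc α
    have h2 := hn α
    have h3 := ha α α.neg
    have h4 := hn (α.and α.neg)
    have h5 := hi (α.and α.neg).neg α.cons
    have h6 := hres α
    cases hα : ν α <;> simp_all
  | mp hab hA ih1 ih2 =>
    rename_i α β
    have h1 := hi α β
    tauto
end

section
/- Every PNmatrix is equivalent to an RNmatrix: given a Θ-partial multialgebra A with universe A and designated set D, the total multialgebra A^∅ on A ∪ {o} (o ∉ A) defined by σ_{A^∅}(a_1,...,a_n) = σ_A(a_1,...,a_n) if this set is nonempty and all a_i ∈ A, and {o} otherwise, together with designated set D and the set F of homomorphisms into A^∅ that never take the value o, induces exactly the same consequence relation as the PNmatrix (A, D). -/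
open Classical in
/-- The total multialgebra `A^∅` on `A ∪ {o}` (realized as `Option A`, with
`none` playing the role of the fresh element `o`) obtained from the partial
multialgebra `pops`: `σ_{A^∅}(a₁,…,aₙ) = σ_A(a₁,…,aₙ)` if all `aᵢ ∈ A` and
this set is nonempty, and `{o}` otherwise. -/
noncomputable def tops {Θ : ℕ → Type} {A : Type}
    (pops : ∀ {k : ℕ}, Θ k → (Fin k → A) → Set A)
    {k : ℕ} (c : Θ k) (args : Fin k → Option A) : Set (Option A) :=
  if (∃ as : Fin k → A, (∀ i, args i = some (as i)) ∧ (pops c as).Nonempty) then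
    {x | ∃ as : Fin k → A, (∀ i, args i = some (as i)) ∧
      ∃ a ∈ pops c as, x = some a}
  else
    {none}

/-- Every PNmatrix is equivalent to an RNmatrix: the RNmatrix
`(A^∅, D, F)`, with `F` the set of homomorphisms into `A^∅` that never take
the value `o`, induces exactly the same consequence relation as the PNmatrix
`(A, D)`. -/
theorem stmt_19 {Θ : ℕ → Type} {V : Type} {A : Type}
    (pops : ∀ {k : ℕ}, Θ k → (Fin k → A) → Set A)
    (D : Set A) (Γ : Set (Fm Θ V)) (φ : Fm Θ V) :
    ((∀ ν : Fm Θ V → A,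
        (∀ (k : ℕ) (c : Θ k) (args : Fin k → Fm Θ V),
          ν (.app c args) ∈ pops c (fun i => ν (args i))) →
        (∀ γ ∈ Γ, ν γ ∈ D) → ν φ ∈ D)
      ↔
     (∀ ν : Fm Θ V → Option A,
        (∀ (k : ℕ) (c : Θ k) (args : Fin k → Fm Θ V),
          ν (.app c args) ∈ tops pops c (fun i => ν (args i))) →
        (∀ α, ν α ≠ none) →
        (∀ γ ∈ Γ, ν γ ∈ some '' D) → ν φ ∈ some '' D)) := by
  constructor
  · intro H ν hom hne hΓ
    -- extract a total A-valued valuation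
    choose μ hμ using fun α => Option.ne_none_iff_exists'.mp (hne α)
    have key : ∀ (k : ℕ) (c : Θ k) (args : Fin k → Fm Θ V),
        μ (.app c args) ∈ pops c (fun i => μ (args i)) := by
      intro k c args
      have h := hom k c args
      unfold tops at h
      split at h
      · obtain ⟨as, has, a, ha, heq⟩ := h
        have hargs : (fun i => μ (args i)) = as := by
          funext i
          have := (hμ (args i)).symm.trans (has i)
          exact Option.some_injective _ this
        have : μ (.app c args) = a := by
          have := (hμ (.app c args)).symm.trans heq
          exact Option.some_injective _ this
        rw [hargs, this]; exact ha
      · simp only [Set.mem_singleton_iff] at h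
        exact absurd ((hμ (.app c args)).symm.trans h) (by simp)
    have hΓ' : ∀ γ ∈ Γ, μ γ ∈ D := by
      intro γ hγ
      obtain ⟨d, hd, heq⟩ := hΓ γ hγ
      have : d = μ γ := Option.some_injective _ (heq.trans (hμ γ))
      exact this ▸ hd
    have := H μ key hΓ'
    exact ⟨μ φ, this, (hμ φ).symm⟩
  · intro H ν hom hΓ
    set ν' : Fm Θ V → Option A := fun α => some (ν α) with hν'
    have key : ∀ (k : ℕ) (c : Θ k) (args : Fin k → Fm Θ V),
        ν' (.app c args) ∈ tops pops c (fun i => ν' (args i)) := by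
      intro k c args
      unfold tops
      rw [if_pos ⟨fun i => ν (args i), fun i => rfl, ⟨_, hom k c args⟩⟩]
      exact ⟨fun i => ν (args i), fun i => rfl, ν (.app c args), hom k c args, rfl⟩
    have := H ν' key (fun α => by simp [hν']) (fun γ hγ => ⟨ν γ, hΓ γ hγ, rfl⟩)
    obtain ⟨d, hd, heq⟩ := this
    have : d = ν φ := Option.some_injective _ heq
    exact this ▸ hd
end
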